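/- arXiv:1905.10224 — 2 statements merged into one kernel-verified Lean document; each statement's English description precedes it below -/
import Mathlib

section
/- For any two matrices A, B ∈ ℝ^{n×n}, ‖B − A‖_F² ≥ Σⱼ (σⱼ(B) − σⱼ(A))², where σ₁(·) ≥ … ≥ σₙ(·) denote the non-increasingly ordered singular values. Moreover, equality holds if trace(B Aᵀ) = Σⱼ σⱼ(B) σⱼ(A). -/
/-!
Expanding the squares, the inequality is von Neumann's trace inequality
`tr (B Aᵀ) ≤ ∑ σⱼ(B) σⱼ(A)`, and the equality case is immediate. With `B = U_B Σ_B V_Bᵀ` and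
`A = U_A Σ_A V_Aᵀ`, the trace equals `σ_B ⬝ᵥ (P ⊙ Q) *ᵥ σ_A` for the orthogonal matrices
`P = V_Bᵀ V_A` and `Q = U_Bᵀ U_A`. Entrywise `P ⊙ Q ≤ (P ⊙ P + Q ⊙ Q) / 2`, and the squared entries
of an orthogonal matrix form a doubly stochastic matrix. By Birkhoff's theorem a doubly stochastic
matrix is a convex combination of permutation matrices, for which the rearrangement inequality
gives `x ⬝ᵥ M *ᵥ y ≤ x ⬝ᵥ y` when `x` and `y` are similarly ordered.
-/

open Matrix Finset

/-- `σ` is the non-increasingly ordered tuple of singular values of `M`. -/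
def IsOrderedSingularValues {n : ℕ} (M : Matrix (Fin n) (Fin n) ℝ) (σ : Fin n → ℝ) : Prop :=
  Antitone σ ∧ (∀ i, 0 ≤ σ i) ∧
  ∃ (U V : Matrix (Fin n) (Fin n) ℝ), Uᵀ * U = 1 ∧ Vᵀ * V = 1 ∧
    M = U * Matrix.diagonal σ * Vᵀ
namespace Matrix

variable {ι R : Type*} [Fintype ι]

section CommRing

variable [CommRing R]

theorem sum_sum_sq_sub_eq (A B : Matrix ι ι R) :
    ∑ i, ∑ j, (B i j - A i j) ^ 2
      = (B * Bᵀ).trace + (A * Aᵀ).trace - 2 * (B * Aᵀ).trace := by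
  have hsq : ∀ i j, (B i j - A i j) ^ 2 = B i j * B i j + A i j * A i j - 2 * (B i j * A i j) :=
    fun _ _ => by ring
  simp only [hsq, sum_add_distrib, sum_sub_distrib, ← mul_sum, trace, diag, mul_apply,
    transpose_apply]

variable [DecidableEq ι]

theorem trace_diagonal_mul_mul_diagonal_mul_transpose (x y : ι → R) (P Q : Matrix ι ι R) :
    (diagonal x * P * diagonal y * Qᵀ).trace = x ⬝ᵥ (P ⊙ Q) *ᵥ y := by
  simp only [trace, diag, mul_apply, diagonal_apply, transpose_apply, hadamard_apply,
    dotProduct, mulVec, ite_mul, zero_mul, mul_ite, mul_zero, sum_ite_eq, sum_ite_eq',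
    mem_univ, if_true, mul_sum]
  exact sum_congr rfl fun i _ => sum_congr rfl fun j _ => by ring

theorem trace_mul_transpose_eq_dotProduct_hadamard_mulVec (U V U' V' : Matrix ι ι R)
    (x y : ι → R) :
    (U * diagonal x * Vᵀ * (U' * diagonal y * V'ᵀ)ᵀ).trace
      = x ⬝ᵥ ((Vᵀ * V') ⊙ (Uᵀ * U')) *ᵥ y := by
  simp only [← trace_diagonal_mul_mul_diagonal_mul_transpose, transpose_mul, transpose_transpose,
    diagonal_transpose, ← Matrix.mul_assoc]
  rw [trace_mul_comm _ U]
  simp only [Matrix.mul_assoc]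

theorem transpose_mul_orthogonal {U V : Matrix ι ι R} (hU : Uᵀ * U = 1) (hV : Vᵀ * V = 1) :
    (Uᵀ * V)ᵀ * (Uᵀ * V) = 1 := by
  rw [transpose_mul, transpose_transpose, Matrix.mul_assoc, ← Matrix.mul_assoc U,
    mul_eq_one_comm.mp hU, Matrix.one_mul, hV]

end CommRing

theorem dotProduct_mulVec_mono [Semiring R] [PartialOrder R] [IsOrderedRing R] {x y : ι → R}
    (hx : ∀ i, 0 ≤ x i) (hy : ∀ j, 0 ≤ y j) {M N : Matrix ι ι R}
    (hMN : ∀ i j, M i j ≤ N i j) : x ⬝ᵥ M *ᵥ y ≤ x ⬝ᵥ N *ᵥ y := by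
  simp only [dotProduct, mulVec]
  gcongr with i _ j _
  · exact hx i
  · exact hy j
  · exact hMN i j

section LinearOrderedField

variable [Field R] [LinearOrder R] [IsStrictOrderedRing R] [DecidableEq ι]

theorem hadamard_self_mem_doublyStochastic {U : Matrix ι ι R} (hU : Uᵀ * U = 1) :
    U ⊙ U ∈ doublyStochastic R ι := by
  have hU' : U * Uᵀ = 1 := mul_eq_one_comm.mp hU
  refine mem_doublyStochastic_iff_sum.mpr ⟨fun i j => mul_self_nonneg _, fun i => ?_, fun j => ?_⟩
  · simpa [mul_apply] using congr_fun₂ hU' i i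
  · simpa [mul_apply] using congr_fun₂ hU j j

theorem dotProduct_mulVec_le_dotProduct_of_mem_doublyStochastic {x y : ι → R}
    (hxy : Monovary x y) {M : Matrix ι ι R} (hM : M ∈ doublyStochastic R ι) :
    x ⬝ᵥ M *ᵥ y ≤ x ⬝ᵥ y := by
  have hperm : {σ.permMatrix R | σ : Equiv.Perm ι} ⊆ {N | x ⬝ᵥ N *ᵥ y ≤ x ⬝ᵥ y} := by
    rintro _ ⟨σ, rfl⟩
    simpa [permMatrix_mulVec, dotProduct] using hxy.sum_mul_comp_perm_le_sum_mul
  have hconv : Convex R {N : Matrix ι ι R | x ⬝ᵥ N *ᵥ y ≤ x ⬝ᵥ y} :=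
    convex_halfSpace_le ⟨fun M N => by simp [add_mulVec, dotProduct_add],
      fun c M => by simp [smul_mulVec, dotProduct_smul]⟩ _
  rw [← SetLike.mem_coe, doublyStochastic_eq_convexHull_permMatrix] at hM
  exact convexHull_min hperm hconv hM

end LinearOrderedField

end Matrix

namespace IsOrderedSingularValues

variable {n : ℕ} {A B : Matrix (Fin n) (Fin n) ℝ} {σA σB : Fin n → ℝ}

theorem trace_mul_transpose_self (hA : IsOrderedSingularValues A σA) :
    (A * Aᵀ).trace = σA ⬝ᵥ σA := by
  obtain ⟨-, -, U, V, hU, hV, rfl⟩ := hA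
  rw [trace_mul_transpose_eq_dotProduct_hadamard_mulVec, hU, hV, hadamard_one, diag_one,
    Pi.one_def, diagonal_one, one_mulVec]

theorem trace_mul_transpose_le (hB : IsOrderedSingularValues B σB)
    (hA : IsOrderedSingularValues A σA) : (B * Aᵀ).trace ≤ σB ⬝ᵥ σA := by
  obtain ⟨hσB, hσB0, UB, VB, hUB, hVB, rfl⟩ := hB
  obtain ⟨hσA, hσA0, UA, VA, hUA, hVA, rfl⟩ := hA
  set P := VBᵀ * VA
  set Q := UBᵀ * UA
  set M : Matrix (Fin n) (Fin n) ℝ := (1 / 2 : ℝ) • (P ⊙ P) + (1 / 2 : ℝ) • (Q ⊙ Q)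
  have hPQ : ∀ i j, (P ⊙ Q) i j ≤ M i j := fun i j => by
    simp only [M, hadamard_apply, Matrix.add_apply, Matrix.smul_apply, smul_eq_mul]
    nlinarith [sq_nonneg (P i j - Q i j)]
  have hM : M ∈ doublyStochastic ℝ (Fin n) :=
    convex_doublyStochastic (hadamard_self_mem_doublyStochastic (transpose_mul_orthogonal hVB hVA))
      (hadamard_self_mem_doublyStochastic (transpose_mul_orthogonal hUB hUA))
      (by norm_num) (by norm_num) (by norm_num)
  rw [trace_mul_transpose_eq_dotProduct_hadamard_mulVec]
  calc σB ⬝ᵥ (P ⊙ Q) *ᵥ σA ≤ σB ⬝ᵥ M *ᵥ σA := dotProduct_mulVec_mono hσB0 hσA0 hPQ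
    _ ≤ σB ⬝ᵥ σA :=
      dotProduct_mulVec_le_dotProduct_of_mem_doublyStochastic (hσB.monovary hσA) hM

end IsOrderedSingularValues

theorem hoffman_wielandt_type_inequality {n : ℕ}
    (A B : Matrix (Fin n) (Fin n) ℝ) (σA σB : Fin n → ℝ)
    (hA : IsOrderedSingularValues A σA) (hB : IsOrderedSingularValues B σB) :
    (∑ i, ∑ j, (B i j - A i j) ^ 2 ≥ ∑ j, (σB j - σA j) ^ 2) ∧
    ((B * Aᵀ).trace = ∑ j, σB j * σA j →
      ∑ i, ∑ j, (B i j - A i j) ^ 2 = ∑ j, (σB j - σA j) ^ 2) := by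
  have hsq : ∑ j, (σB j - σA j) ^ 2 = σB ⬝ᵥ σB + σA ⬝ᵥ σA - 2 * σB ⬝ᵥ σA := by
    simp only [dotProduct, mul_sum, ← sum_add_distrib, ← sum_sub_distrib]
    exact sum_congr rfl fun j _ => by ring
  rw [sum_sum_sq_sub_eq, hB.trace_mul_transpose_self, hA.trace_mul_transpose_self, hsq]
  exact ⟨by linarith [hB.trace_mul_transpose_le hA], fun h => by rw [h]; rfl⟩
end

section
/- Let H̃ ∈ ℝ^{n×k}, L = I − H̃ H̃ᵀ, and φ(λ) = Σ_{j=0}^{p} aⱼ λʲ a polynomial with Taylor coefficients bⱼ = Σ_{i=j}^{p} C(i,j) aᵢ around 1. Then φ(L) = b₀ I + H̃ M H̃ᵀ where M = Σ_{j=1}^{p} (−1)ʲ bⱼ (H̃ᵀ H̃)^{j−1} ∈ ℝ^{k×k}. -/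
open Matrix Finset

theorem polynomial_filter_structure {n k : ℕ}
    (Ht : Matrix (Fin n) (Fin k) ℝ)
    (L : Matrix (Fin n) (Fin n) ℝ) (hL : L = 1 - Ht * Htᵀ)
    (p : ℕ) (a b : ℕ → ℝ)
    (hb : ∀ j, b j = ∑ i ∈ Finset.Icc j p, (i.choose j : ℝ) * a i)
    (M : Matrix (Fin k) (Fin k) ℝ)
    (hM : M = ∑ j ∈ Finset.Icc 1 p, ((-1 : ℝ) ^ j * b j) • (Htᵀ * Ht) ^ (j - 1)) :
    ∑ j ∈ Finset.range (p + 1), a j • L ^ j = b 0 • 1 + Ht * M * Htᵀ := by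
  set A := Ht * Htᵀ with hA
  set B := Htᵀ * Ht with hB
  have hAi : ∀ m : ℕ, A ^ (m + 1) = Ht * B ^ m * Htᵀ := by
    intro m
    induction m with
    | zero => simp [hA]
    | succ m ih =>
      rw [pow_succ, ih, hA, pow_succ, hB]
      simp [Matrix.mul_assoc]
  have hLpow : ∀ j, L ^ j =
      ∑ i ∈ Finset.range (j + 1), ((-1 : ℝ) ^ i * (j.choose i : ℝ)) • A ^ i := by
    intro j
    have hc : Commute (-A) (1 : Matrix (Fin n) (Fin n) ℝ) := Commute.one_right _
    rw [hL, sub_eq_add_neg, add_comm, hc.add_pow]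
    refine Finset.sum_congr rfl fun i _ => ?_
    have h1 : (-A) ^ i = ((-1 : ℝ) ^ i) • A ^ i := by
      rw [← neg_one_smul ℝ A, smul_pow]
    rw [h1, one_pow, mul_one]
    rw [smul_mul_assoc, ← (Nat.cast_commute (j.choose i) (A ^ i)).eq,
      ← nsmul_eq_mul, ← Nat.cast_smul_eq_nsmul ℝ, smul_smul, mul_comm]
  calc ∑ j ∈ Finset.range (p + 1), a j • L ^ j
      = ∑ j ∈ Finset.Ico 0 (p + 1), ∑ i ∈ Finset.Ico 0 (j + 1),
          ((-1 : ℝ) ^ i * (j.choose i : ℝ) * a j) • A ^ i := by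
        rw [← Finset.range_eq_Ico]
        refine Finset.sum_congr rfl fun j _ => ?_
        rw [hLpow, Finset.smul_sum]
        refine Finset.sum_congr (by rw [Finset.range_eq_Ico]) fun i _ => ?_
        rw [smul_smul]; ring_nf
    _ = ∑ i ∈ Finset.Ico 0 (p + 1), ∑ j ∈ Finset.Ico i (p + 1),
          ((-1 : ℝ) ^ i * (j.choose i : ℝ) * a j) • A ^ i :=
        (Finset.sum_Ico_Ico_comm 0 (p + 1)
          (fun i j => ((-1 : ℝ) ^ i * (j.choose i : ℝ) * a j) • A ^ i)).symm
    _ = ∑ i ∈ Finset.Ico 0 (p + 1), ((-1 : ℝ) ^ i * b i) • A ^ i := by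
        refine Finset.sum_congr rfl fun i _ => ?_
        rw [← Finset.sum_smul]
        congr 1
        rw [hb i, ← Finset.Ico_add_one_right_eq_Icc, Finset.mul_sum]
        refine Finset.sum_congr rfl fun j _ => ?_
        ring
    _ = b 0 • 1 + Ht * M * Htᵀ := by
        rw [Finset.sum_eq_sum_Ico_succ_bot (by omega)]
        congr 1
        · simp
        · rw [hM, Matrix.mul_sum, Matrix.sum_mul, ← Finset.Ico_add_one_right_eq_Icc]
          refine Finset.sum_congr rfl fun i hi => ?_
          simp only [Finset.mem_Ico] at hi
          obtain ⟨m, rfl⟩ : ∃ m, i = m + 1 := ⟨i - 1, by omega⟩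
          rw [hAi, Nat.add_sub_cancel]
          rw [Matrix.mul_smul, Matrix.smul_mul]
end
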